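/- Let χ : K^× → ℂ^× be a continuous homomorphism trivial on 1 + 𝔭 but nontrivial on K^×, let u, v ∈ K^× with m = −ord(uv) ≥ 2, and write ν^α(x) = |x|^α for α ∈ ℂ. If ord(u) = ord(v), then J_{ν^α·χ}(u, v) = J_χ(u, v) for every α ∈ ℂ (the value is independent of α). If ord(u) = ord(v) + 2, then J_{ν^α·χ}(u, v) = q^α·J_χ(u, v) for every α ∈ ℂ. -/

import Mathlib

open MeasureTheory
open scoped Classical

noncomputable section

variable {K : Type}

/-- The Cayley map `X ↦ (1 + X)(1 - X)⁻¹`. -/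
def cay [Field K] (X : K) : K := (1 + X) * (1 - X)⁻¹

/-- `pSet q i` is the `i`-th power `𝔭^i` of the maximal ideal, as a subset of `K`:
the set of `x` with `‖x‖ ≤ q ^ (-i)` (for `i = 0` this is the ring of integers `O`). -/
def pSet [NormedField K] (q : ℕ) (i : ℤ) : Set K := {x | ‖x‖ ≤ (q : ℝ) ^ (-i)}

/-- `R` is a set of representatives in `O` for the residue field `O/𝔭`. -/
def IsResidueSystem [NormedField K] (R : Finset K) : Prop :=
  (∀ x ∈ R, ‖x‖ ≤ 1) ∧ ∀ y : K, ‖y‖ ≤ 1 → ∃! x, x ∈ R ∧ ‖y - x‖ < 1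

/-- `R` is a set of representatives for `𝔭^i/𝔭^(i+1)`. -/
def IsPResidueSystem [NormedField K] (q : ℕ) (i : ℤ) (R : Finset K) : Prop :=
  (∀ x ∈ R, ‖x‖ ≤ (q : ℝ) ^ (-i)) ∧
    ∀ y : K, ‖y‖ ≤ (q : ℝ) ^ (-i) → ∃! c, c ∈ R ∧ ‖y - c‖ ≤ (q : ℝ) ^ (-(i + 1))

/-- The quadratic character `η` of the residue field, evaluated at the residue of a unit
`u` of `O`: it is `1` if `u` is a square modulo the maximal ideal and `-1` otherwise. -/
def etaK [NormedField K] (u : K) : ℂ := if ∃ y : K, ‖y * y - u‖ < 1 then 1 else -1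

/-- The character `sgn_ϖ` of `K^×`: `sgn_ϖ(uϖ^n) = η(ū)·η(-1)^n` for `u ∈ O^×`, `n ∈ ℤ`. -/
def sgnP [NormedField K] (ord : K → ℤ) (ϖ : K) (x : K) : ℂ :=
  etaK (x * ϖ ^ (-ord x)) * etaK (-1 : K) ^ ord x

/-- The unramified quadratic character `sgn_ε(x) = (-1)^(ord x)`. -/
def sgnE [NormedField K] (ord : K → ℤ) (x : K) : ℂ := (-1 : ℂ) ^ ord x

/-- `ν^{1/2}(x) = |x|^{1/2}`. -/
def nuHalf [NormedField K] (x : K) : ℂ := (Real.sqrt ‖x‖ : ℂ)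

/-- The normalized Gauss sum `G_{ϖ'}(Ψ) = q^{-1/2} Σ_{X ∈ O/𝔭} Ψ((-ϖ')^d · X²)`,
where `d` is the depth of `Ψ`, computed using the residue system `R`. -/
def gaussSumK [NormedField K] (q : ℕ) (Ψ : K → ℂ) (ϖ' : K) (d : ℤ) (R : Finset K) : ℂ :=
  (Real.sqrt q : ℂ)⁻¹ * ∑ X ∈ R, Ψ ((-ϖ') ^ d * X ^ 2)

/-- The `p`-adic Bessel function `J_χ(u,v)`: the unconditional sum over `n ∈ ℤ` of the
integrals of `Φ(ux + vx⁻¹)·χ(x)` over the shells `{ord x = n}` against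
`d^×x = ‖x‖⁻¹ dμ(x)`. -/
def bessel [NormedField K] [MeasurableSpace K] (μ : Measure K) (Φ : K → ℂ)
    (ord : K → ℤ) (χ : K → ℂ) (u v : K) : ℂ :=
  ∑' n : ℤ, ∫ x in {x : K | x ≠ 0 ∧ ord x = n},
    Φ (u * x + v * x⁻¹) * χ x * (‖x‖ : ℂ)⁻¹ ∂μ

/-- The character `sgn_θ` of `K^×`: identically `1` if `θ` is a square, and otherwise
the character whose kernel is exactly the set of nonzero values of the norm form
`a² - b²θ`. -/
def sgnTheta [Field K] (θ : K) (x : K) : ℂ :=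
  if ∃ a b : K, x = a ^ 2 - b ^ 2 * θ then 1 else -1

/-- `J^θ_χ = (J_χ + J_{χ·sgn_θ})/2`. -/
def besselTheta [NormedField K] [MeasurableSpace K] (μ : Measure K) (Φ : K → ℂ)
    (ord : K → ℤ) (θ : K) (χ : K → ℂ) (u v : K) : ℂ :=
  (bessel μ Φ ord χ u v + bessel μ Φ ord (fun x => χ x * sgnTheta θ x) u v) / 2

/-- The mock Fourier transform `M(Y)` of the orbital integral of `X* = β·√θ`, evaluated at
`Y = s·√θ'`: the unconditional sum over `n ∈ ℤ` of the integrals over the parts of the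
shells `{ord x = n}` lying in the image of the norm form `a² - b²θ`, against
`d^×x = ‖x‖⁻¹ dμ(x)`, of the unconditional sums over `k ∈ ℤ` of the integrals of
`Φ(βs(xθ' + x⁻¹θ - x⁻¹t²))` over the shells `{ord t = k}` against `dμ(t)`. -/
def mockM [NormedField K] [MeasurableSpace K] (μ : Measure K) (Φ : K → ℂ)
    (ord : K → ℤ) (θ β s θ' : K) : ℂ :=
  ∑' n : ℤ, ∫ x in {x : K | (x ≠ 0 ∧ ord x = n) ∧ ∃ a b : K, x = a ^ 2 - b ^ 2 * θ},
      (∑' k : ℤ, ∫ t in {t : K | t ≠ 0 ∧ ord t = k},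
          Φ (β * s * (x * θ' + x⁻¹ * θ - x⁻¹ * t ^ 2)) ∂μ) * (‖x‖ : ℂ)⁻¹ ∂μ

/-- The standard torus `T_θ ≤ SL₂(K)`, as a set of matrices. -/
def torusSet [Field K] (θ : K) : Set (Matrix (Fin 2) (Fin 2) K) :=
  {A | ∃ a b : K, a ^ 2 - b ^ 2 * θ = 1 ∧ A = Matrix.of ![![a, b], ![b * θ, a]]}

/-- `Q₃(T) = -T(T² + T + 1)`. -/
def Q3 (T : ℂ) : ℂ := -T * (T ^ 2 + T + 1)

/-!
Translating `x` by a small `t` multiplies the phase `Φ(u x + v x⁻¹)` by the character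
`t ↦ Φ((u - v x⁻²) t)`, up to a quadratic error `v t² x⁻² (x + t)⁻¹` lying in `O`, while `χ`
and `‖x‖` do not change since `χ` is trivial on `1 + 𝔭`. On a shell `ord x = n` with
`‖u x‖ ≠ ‖v x⁻¹‖`, the condition `m ≥ 2` makes `‖(u - v x⁻²) x‖ ≥ q²`, so this character is
nontrivial on a ball of translations shorter than `‖x‖`; averaging over that ball (Fubini) shows
that the shell integral vanishes. Only the shell with `‖u x‖ = ‖v x⁻¹‖`, i.e.
`2 ord x = ord v - ord u`, survives, and on it `ν^α = q^{-α ord x}` is constant: `1` when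
`ord u = ord v`, and `q^α` when `ord u = ord v + 2`.
-/

open Metric Function

section Ultrametric

variable {E : Type*} [SeminormedAddCommGroup E] [IsUltrametricDist E]

lemma norm_add_eq_left_of_norm_lt {x t : E} (h : ‖t‖ < ‖x‖) : ‖x + t‖ = ‖x‖ := by
  rw [IsUltrametricDist.norm_add_eq_max_of_norm_ne_norm h.ne', max_eq_left h.le]

lemma preimage_add_right_sphere_zero {t : E} {r : ℝ} (ht : ‖t‖ < r) :
    (· + t) ⁻¹' sphere (0 : E) r = sphere 0 r := by
  ext x
  simp only [Set.mem_preimage, mem_sphere_zero_iff_norm]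
  constructor
  · intro h
    have h' := norm_add_eq_left_of_norm_lt (x := x + t) (t := -t) (by rwa [norm_neg, h])
    rwa [add_neg_cancel_right, h] at h'
  · intro h
    rw [norm_add_eq_left_of_norm_lt (h ▸ ht), h]

lemma preimage_add_right_closedBall_zero {t : E} {r : ℝ} (ht : ‖t‖ ≤ r) :
    (· + t) ⁻¹' closedBall (0 : E) r = closedBall 0 r := by
  rw [preimage_add_right_closedBall, zero_sub]
  exact (IsUltrametricDist.closedBall_eq_of_mem (by simpa using ht)).symm

end Ultrametric

lemma continuousOn_of_forall_dist_lt_eq {X Y : Type*} [PseudoMetricSpace X] [TopologicalSpace Y]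
    {f : X → Y} {S : Set X} {r : ℝ} (hr : 0 < r)
    (h : ∀ x ∈ S, ∀ y, dist y x < r → f y = f x) : ContinuousOn f S := fun x hx =>
  (Filter.EventuallyEq.continuousAt (y := f x)
    (Filter.mem_of_superset (ball_mem_nhds x hr) fun y hy => h x hx y hy)).continuousWithinAt

lemma continuous_of_map_add_eq_mul {E : Type*} [SeminormedAddCommGroup E] {Φ : E → ℂ}
    (hΦadd : ∀ x y, Φ (x + y) = Φ x * Φ y) (hΦ1 : ∀ x : E, ‖x‖ ≤ 1 → Φ x = 1) : Continuous Φ :=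
  continuousOn_univ.mp <| continuousOn_of_forall_dist_lt_eq one_pos fun x _ y hy => by
    rw [← add_sub_cancel x y, hΦadd, hΦ1 (y - x) (dist_eq_norm y x ▸ hy).le, mul_one]

section Translation

variable {G : Type*} [AddGroup G] [MeasurableSpace G] [MeasurableAdd G]
  (μ : Measure G) [μ.IsAddRightInvariant]

lemma setIntegral_comp_add_right_of_preimage_eq {E : Type*} [NormedAddCommGroup E]
    [NormedSpace ℝ E] {S : Set G} {t : G} (hS : (· + t) ⁻¹' S = S) (f : G → E) :
    ∫ x in S, f (x + t) ∂μ = ∫ x in S, f x ∂μ := by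
  conv_rhs => rw [← map_add_right_eq_self μ t]
  have hemb : MeasurableEmbedding (· + t : G → G) :=
    (MeasurableEquiv.addRight t).measurableEmbedding
  rw [hemb.setIntegral_map f S, hS]

lemma setIntegral_eq_zero_of_map_add_eq_mul {ψ : G → ℂ} (hψ : ∀ x y, ψ (x + y) = ψ x * ψ y)
    {S : Set G} {t : G} (hS : (· + t) ⁻¹' S = S) (ht : ψ t ≠ 1) :
    ∫ x in S, ψ x ∂μ = 0 := by
  have key : (∫ x in S, ψ x ∂μ) * ψ t = ∫ x in S, ψ x ∂μ := by
    rw [← integral_mul_const, ← setIntegral_comp_add_right_of_preimage_eq μ hS ψ]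
    simp_rw [hψ]
  by_contra h
  exact ht ((mul_eq_left₀ h).mp key)

end Translation

lemma eq_zero_of_forall_setIntegral_eq {X Y : Type*}
    [TopologicalSpace X] [T2Space X] [SecondCountableTopology X] [MeasurableSpace X] [BorelSpace X]
    [TopologicalSpace Y] [T2Space Y] [SecondCountableTopology Y] [MeasurableSpace Y] [BorelSpace Y]
    {μ : Measure X} {ν : Measure Y} [IsFiniteMeasureOnCompacts μ] [IsFiniteMeasureOnCompacts ν]
    [SFinite μ] [SFinite ν] {S : Set X} {T : Set Y} (hS : IsCompact S) (hT : IsCompact T)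
    (hT0 : ν T ≠ 0) {h : Y → X → ℂ} (hcont : ContinuousOn (uncurry h) (T ×ˢ S)) {I : ℂ}
    (hrow : ∀ t ∈ T, ∫ x in S, h t x ∂μ = I) (hcol : ∀ x ∈ S, ∫ t in T, h t x ∂ν = 0) :
    I = 0 := by
  have hint : Integrable (uncurry h) ((ν.restrict T).prod (μ.restrict S)) := by
    rw [Measure.prod_restrict]
    exact hcont.integrableOn_compact (hT.prod hS)
  have hT0' : (ν T).toReal ≠ 0 := ENNReal.toReal_ne_zero.mpr ⟨hT0, hT.measure_ne_top⟩
  have : (ν T).toReal • I = 0 := calc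
    (ν T).toReal • I = ∫ t in T, ∫ x in S, h t x ∂μ ∂ν := by
      rw [setIntegral_congr_fun hT.measurableSet hrow, setIntegral_const]; rfl
    _ = ∫ x in S, ∫ t in T, h t x ∂ν ∂μ := integral_integral_swap hint
    _ = 0 := by rw [setIntegral_congr_fun hS.measurableSet hcol, integral_zero]
  exact (smul_eq_zero.mp this).resolve_left hT0'

lemma mul_add_add_mul_inv_add {F : Type*} [Field F] (u v : F) {x t : F} (hx : x ≠ 0)
    (hxt : x + t ≠ 0) :
    u * (x + t) + v * (x + t)⁻¹ =
      (u * x + v * x⁻¹) + (u - v * x⁻¹ ^ 2) * t + v * t ^ 2 * x⁻¹ ^ 2 * (x + t)⁻¹ := by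
  field_simp
  ring

section Shell

variable {K : Type*} [NormedField K] [IsUltrametricDist K]

lemma map_mul_add_add_mul_inv_add {Φ : K → ℂ} (hΦadd : ∀ x y, Φ (x + y) = Φ x * Φ y)
    (hΦ1 : ∀ x : K, ‖x‖ ≤ 1 → Φ x = 1) (u v : K) {x t : K} (hx : x ≠ 0) (ht : ‖t‖ < ‖x‖)
    (hsmall : ‖v‖ * ‖t‖ ^ 2 ≤ ‖x‖ ^ 3) :
    Φ (u * (x + t) + v * (x + t)⁻¹) = Φ ((u - v * x⁻¹ ^ 2) * t) * Φ (u * x + v * x⁻¹) := by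
  have hxt : ‖x + t‖ = ‖x‖ := norm_add_eq_left_of_norm_lt ht
  have hxt0 : x + t ≠ 0 := norm_ne_zero_iff.mp (hxt ▸ norm_ne_zero_iff.mpr hx)
  have hE : ‖v * t ^ 2 * x⁻¹ ^ 2 * (x + t)⁻¹‖ ≤ 1 := by
    have hxpos : 0 < ‖x‖ := norm_pos_iff.mpr hx
    rw [norm_mul, norm_mul, norm_mul, norm_inv, norm_pow, norm_pow, norm_inv, hxt]
    calc ‖v‖ * ‖t‖ ^ 2 * ‖x‖⁻¹ ^ 2 * ‖x‖⁻¹ = ‖v‖ * ‖t‖ ^ 2 / ‖x‖ ^ 3 := by field_simp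
      _ ≤ 1 := (div_le_one (by positivity)).mpr hsmall
  rw [mul_add_add_mul_inv_add u v hx hxt0, hΦadd, hΦadd, hΦ1 _ hE]
  ring

lemma norm_sub_mul_inv_sq_eq (u v : K) {x : K} {r : ℝ} (hr : 0 < r) (hx : ‖x‖ = r)
    (hne : ‖u‖ * r ≠ ‖v‖ / r) : ‖u - v * x⁻¹ ^ 2‖ = max (‖u‖ * r) (‖v‖ / r) / r := by
  have hx0 : x ≠ 0 := norm_ne_zero_iff.mp (hx ▸ hr.ne')
  have hcx : (u - v * x⁻¹ ^ 2) * x = u * x + -(v * x⁻¹) := by field_simp; ring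
  have hnorm : ‖u * x‖ ≠ ‖-(v * x⁻¹)‖ := by
    rwa [norm_neg, norm_mul, norm_mul, norm_inv, hx, ← div_eq_mul_inv]
  rw [eq_div_iff hr.ne', ← hx, ← norm_mul, hcx,
    IsUltrametricDist.norm_add_eq_max_of_norm_ne_norm hnorm, norm_neg, norm_mul, norm_mul,
    norm_inv, hx, ← div_eq_mul_inv]

lemma continuousOn_kernel_prod_sphere {Φ : K → ℂ} (hΦ : Continuous Φ) {f : K → ℂ} {r : ℝ}
    (hr : 0 < r) (hf : ContinuousOn f (sphere 0 r)) (u v : K) (T : Set K) :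
    ContinuousOn (uncurry fun t x => Φ ((u - v * x⁻¹ ^ 2) * t) * (Φ (u * x + v * x⁻¹) * f x))
      (T ×ˢ sphere 0 r) := by
  have hinv : ContinuousOn (fun p : K × K => p.2⁻¹) (T ×ˢ sphere 0 r) :=
    continuous_snd.continuousOn.inv₀ fun p hp => ne_of_mem_sphere hp.2 hr.ne'
  refine .mul ?_ (.mul ?_ (hf.comp continuousOn_snd fun p hp => hp.2))
  · exact hΦ.comp_continuousOn
      ((continuousOn_const.sub (continuousOn_const.mul (hinv.pow 2))).mul continuousOn_fst)
  · exact hΦ.comp_continuousOn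
      ((continuousOn_const.mul continuousOn_snd).add (continuousOn_const.mul hinv))

variable [MeasurableSpace K] [BorelSpace K] (μ : Measure K) [μ.IsAddHaarMeasure]

lemma setIntegral_closedBall_map_mul_eq_zero {Φ : K → ℂ}
    (hΦadd : ∀ x y, Φ (x + y) = Φ x * Φ y) {c x₀ : K} (hc : c ≠ 0) (hx₀ : Φ x₀ ≠ 1) {ρ : ℝ}
    (hρ : ‖x₀‖ ≤ ‖c‖ * ρ) : ∫ t in closedBall 0 ρ, Φ (c * t) ∂μ = 0 := by
  refine setIntegral_eq_zero_of_map_add_eq_mul μ (fun s t => by rw [mul_add, hΦadd])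
    (preimage_add_right_closedBall_zero (t := c⁻¹ * x₀) ?_) (by rwa [mul_inv_cancel_left₀ hc])
  rw [norm_mul, norm_inv, inv_mul_le_iff₀ (norm_pos_iff.mpr hc)]
  exact hρ

lemma setIntegral_sphere_besselIntegrand_translate {Φ : K → ℂ}
    (hΦadd : ∀ x y, Φ (x + y) = Φ x * Φ y) (hΦ1 : ∀ x : K, ‖x‖ ≤ 1 → Φ x = 1) {u v t : K}
    {r : ℝ} (hr : 0 < r) (htr : ‖t‖ < r) (hsmall : ‖v‖ * ‖t‖ ^ 2 ≤ r ^ 3) {f : K → ℂ}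
    (hf : ∀ x ∈ sphere (0 : K) r, ∀ t, ‖t‖ < r → f (x + t) = f x) :
    ∫ x in sphere (0 : K) r, Φ ((u - v * x⁻¹ ^ 2) * t) * (Φ (u * x + v * x⁻¹) * f x) ∂μ =
      ∫ x in sphere (0 : K) r, Φ (u * x + v * x⁻¹) * f x ∂μ := by
  rw [← setIntegral_comp_add_right_of_preimage_eq μ (preimage_add_right_sphere_zero htr)
    (fun x => Φ (u * x + v * x⁻¹) * f x)]
  refine setIntegral_congr_fun isClosed_sphere.measurableSet fun x hx => ?_
  have hxr : ‖x‖ = r := mem_sphere_zero_iff_norm.mp hx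
  rw [map_mul_add_add_mul_inv_add hΦadd hΦ1 u v (ne_of_mem_sphere hx hr.ne') (hxr ▸ htr)
    (hxr ▸ hsmall), hf x hx t htr, mul_assoc]

variable [ProperSpace K]

theorem setIntegral_sphere_besselIntegrand_eq_zero {Φ : K → ℂ}
    (hΦadd : ∀ x y, Φ (x + y) = Φ x * Φ y) (hΦ1 : ∀ x : K, ‖x‖ ≤ 1 → Φ x = 1)
    {x₀ : K} (hx₀ : Φ x₀ ≠ 1) {u v : K} {r : ℝ} (hr : 0 < r) (hne : ‖u‖ * r ≠ ‖v‖ / r)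
    (hlarge : ‖x₀‖ ^ 2 ≤ max (‖u‖ * r) (‖v‖ / r)) {f : K → ℂ}
    (hf : ∀ x ∈ sphere (0 : K) r, ∀ t, ‖t‖ < r → f (x + t) = f x) :
    ∫ x in sphere (0 : K) r, Φ (u * x + v * x⁻¹) * f x ∂μ = 0 := by
  set R := max (‖u‖ * r) (‖v‖ / r)
  -- `closedBall 0 ρ` contains `(u - v x⁻²)⁻¹ x₀`, yet the translation error term stays in `O`
  set ρ := ‖x₀‖ * r / R
  have hx₀1 : 1 < ‖x₀‖ := not_le.mp fun h => hx₀ (hΦ1 x₀ h)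
  have hR : ‖x₀‖ < R := by nlinarith
  have hRpos : 0 < R := by linarith
  have hρr : ρ < r := by
    rw [div_lt_iff₀ hRpos]
    exact mul_lt_mul_of_pos_right hR hr |>.trans_eq (mul_comm _ _)
  have hvρ : ‖v‖ * ρ ^ 2 ≤ r ^ 3 := by
    have hv : ‖v‖ / r ≤ R := le_max_right _ _
    calc ‖v‖ * ρ ^ 2 = ‖v‖ / r * ‖x₀‖ ^ 2 * r ^ 3 / R ^ 2 := by simp only [ρ]; field_simp
      _ ≤ R * R * r ^ 3 / R ^ 2 := by gcongr
      _ = r ^ 3 := by field_simp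
  have hcol : ∀ x ∈ sphere (0 : K) r, ∫ t in closedBall 0 ρ,
      Φ ((u - v * x⁻¹ ^ 2) * t) * (Φ (u * x + v * x⁻¹) * f x) ∂μ = 0 := by
    intro x hx
    have hc : ‖u - v * x⁻¹ ^ 2‖ = R / r :=
      norm_sub_mul_inv_sq_eq u v hr (mem_sphere_zero_iff_norm.mp hx) hne
    have hcρ : ‖x₀‖ ≤ ‖u - v * x⁻¹ ^ 2‖ * ρ := le_of_eq (by rw [hc]; simp only [ρ]; field_simp)
    rw [integral_mul_const, setIntegral_closedBall_map_mul_eq_zero μ hΦadd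
      (norm_ne_zero_iff.mp (by rw [hc]; positivity)) hx₀ hcρ, zero_mul]
  have hrow : ∀ t ∈ closedBall (0 : K) ρ, ∫ x in sphere (0 : K) r,
      Φ ((u - v * x⁻¹ ^ 2) * t) * (Φ (u * x + v * x⁻¹) * f x) ∂μ =
        ∫ x in sphere (0 : K) r, Φ (u * x + v * x⁻¹) * f x ∂μ := fun t ht =>
    have ht : ‖t‖ ≤ ρ := mem_closedBall_zero_iff.mp ht
    setIntegral_sphere_besselIntegrand_translate μ hΦadd hΦ1 hr (ht.trans_lt hρr)
      (hvρ.trans' (by gcongr)) hf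
  have hfcont : ContinuousOn f (sphere 0 r) :=
    continuousOn_of_forall_dist_lt_eq hr fun x hx y hy => by
      rw [← add_sub_cancel x y, hf x hx _ (dist_eq_norm y x ▸ hy)]
  exact eq_zero_of_forall_setIntegral_eq (isCompact_sphere 0 r) (isCompact_closedBall 0 ρ)
    (measure_closedBall_pos μ 0 (by positivity)).ne'
    (continuousOn_kernel_prod_sphere (continuous_of_map_add_eq_mul hΦadd hΦ1) hr hfcont u v _)
    hrow hcol

end Shell

section Valuation

variable {K : Type*} [NormedField K] {q : ℕ} {ord : K → ℤ}

lemma shell_eq_sphere (hq : 1 < q) (hord : ∀ x : K, x ≠ 0 → ‖x‖ = (q : ℝ) ^ (-ord x)) (n : ℤ) :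
    {x : K | x ≠ 0 ∧ ord x = n} = sphere 0 ((q : ℝ) ^ (-n)) := by
  have hq' : (1 : ℝ) < q := by exact_mod_cast hq
  ext x
  rw [mem_sphere_zero_iff_norm]
  constructor
  · rintro ⟨hx, rfl⟩
    exact hord x hx
  · intro h
    have hx : x ≠ 0 := norm_ne_zero_iff.mp (h ▸ (zpow_pos (by linarith) _).ne')
    refine ⟨hx, ?_⟩
    have := zpow_right_injective₀ (by linarith) hq'.ne' ((hord x hx).symm.trans h)
    omega

lemma ord_mul (hq : 1 < q) (hord : ∀ x : K, x ≠ 0 → ‖x‖ = (q : ℝ) ^ (-ord x)) {x y : K}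
    (hx : x ≠ 0) (hy : y ≠ 0) : ord (x * y) = ord x + ord y := by
  have hq' : (1 : ℝ) < q := by exact_mod_cast hq
  have h := hord (x * y) (mul_ne_zero hx hy)
  rw [norm_mul, hord x hx, hord y hy, ← zpow_add₀ (by positivity)] at h
  have := zpow_right_injective₀ (by linarith) hq'.ne' h
  omega

lemma map_add_eq_of_norm_lt {χ : K → ℂ} (hχmul : ∀ x y : K, x ≠ 0 → y ≠ 0 → χ (x * y) = χ x * χ y)
    (hχtriv : ∀ x : K, ‖x - 1‖ < 1 → χ x = 1) {x t : K} (hx : x ≠ 0) (ht : ‖t‖ < ‖x‖) :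
    χ (x + t) = χ x := by
  have hsmall : ‖x⁻¹ * t‖ < 1 := by
    rwa [norm_mul, norm_inv, inv_mul_lt_one₀ (norm_pos_iff.mpr hx)]
  have hunit : 1 + x⁻¹ * t ≠ 0 := fun h => by
    rw [eq_neg_of_add_eq_zero_right h, norm_neg, norm_one] at hsmall
    exact lt_irrefl _ hsmall
  rw [show x + t = x * (1 + x⁻¹ * t) by field_simp, hχmul x _ hx hunit,
    hχtriv (1 + x⁻¹ * t) (by rwa [add_sub_cancel_left]), mul_one]

variable [IsUltrametricDist K] [ProperSpace K] [MeasurableSpace K] [BorelSpace K]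
  (μ : Measure K) [μ.IsAddHaarMeasure]

lemma setIntegral_shell_eq_zero (hq : 1 < q)
    (hord : ∀ x : K, x ≠ 0 → ‖x‖ = (q : ℝ) ^ (-ord x)) {Φ : K → ℂ}
    (hΦadd : ∀ x y, Φ (x + y) = Φ x * Φ y) (hΦ1 : ∀ x : K, ‖x‖ ≤ 1 → Φ x = 1)
    {x₀ : K} (hx₀q : ‖x₀‖ ≤ q) (hx₀ : Φ x₀ ≠ 1) {u v : K} (hu : u ≠ 0) (hv : v ≠ 0)
    (huv : ord u + ord v ≤ -2) {n : ℤ} (hn : ord u + n ≠ ord v - n) {f : K → ℂ}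
    (hf : ∀ x t : K, x ≠ 0 → ‖t‖ < ‖x‖ → f (x + t) = f x) :
    ∫ x in {x : K | x ≠ 0 ∧ ord x = n}, Φ (u * x + v * x⁻¹) * f x * (‖x‖ : ℂ)⁻¹ ∂μ = 0 := by
  have hq' : (1 : ℝ) < q := by exact_mod_cast hq
  have hq0 : (0 : ℝ) < q := by linarith
  have hnu : ‖u‖ * (q : ℝ) ^ (-n) = (q : ℝ) ^ (-(ord u + n)) := by
    rw [hord u hu, ← zpow_add₀ hq0.ne']; ring_nf
  have hnv : ‖v‖ / (q : ℝ) ^ (-n) = (q : ℝ) ^ (-(ord v - n)) := by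
    rw [hord v hv, ← zpow_sub₀ hq0.ne']; ring_nf
  have hmin : min (ord u + n) (ord v - n) ≤ -2 := by omega
  simp_rw [shell_eq_sphere hq hord, mul_assoc]
  refine setIntegral_sphere_besselIntegrand_eq_zero μ hΦadd hΦ1 hx₀ (zpow_pos hq0 _) ?_ ?_ ?_
  · rw [hnu, hnv]
    exact fun h => hn (by have := zpow_right_injective₀ hq0 hq'.ne' h; omega)
  · rw [hnu, hnv]
    calc ‖x₀‖ ^ 2 ≤ (q : ℝ) ^ (2 : ℤ) := by rw [zpow_two, sq]; gcongr
      _ ≤ (q : ℝ) ^ (-min (ord u + n) (ord v - n)) := zpow_le_zpow_right₀ hq'.le (by omega)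
      _ = max ((q : ℝ) ^ (-(ord u + n))) ((q : ℝ) ^ (-(ord v - n))) := by
        rcases le_total (ord u + n) (ord v - n) with h | h
        · rw [min_eq_left h, max_eq_left (zpow_le_zpow_right₀ hq'.le (by omega))]
        · rw [min_eq_right h, max_eq_right (zpow_le_zpow_right₀ hq'.le (by omega))]
  · intro x hx t ht
    rw [mem_sphere_zero_iff_norm] at hx
    have hx0 : x ≠ 0 := norm_ne_zero_iff.mp (hx ▸ (zpow_pos hq0 _).ne')
    rw [norm_add_eq_left_of_norm_lt (hx ▸ ht), hf x t hx0 (hx ▸ ht)]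

end Valuation

section Bessel

variable {K : Type} [NormedField K] [IsUltrametricDist K] [ProperSpace K] [MeasurableSpace K]
  [BorelSpace K] (μ : Measure K) [μ.IsAddHaarMeasure] {q : ℕ} {ord : K → ℤ} {Φ : K → ℂ}

lemma bessel_eq_setIntegral_shell (hq : 1 < q)
    (hord : ∀ x : K, x ≠ 0 → ‖x‖ = (q : ℝ) ^ (-ord x))
    (hΦadd : ∀ x y, Φ (x + y) = Φ x * Φ y) (hΦ1 : ∀ x : K, ‖x‖ ≤ 1 → Φ x = 1)
    {x₀ : K} (hx₀q : ‖x₀‖ ≤ q) (hx₀ : Φ x₀ ≠ 1) {u v : K} (hu : u ≠ 0) (hv : v ≠ 0)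
    (huv : ord u + ord v ≤ -2) {n₀ : ℤ} (hn₀ : ord v - ord u = 2 * n₀) {f : K → ℂ}
    (hf : ∀ x t : K, x ≠ 0 → ‖t‖ < ‖x‖ → f (x + t) = f x) :
    bessel μ Φ ord f u v =
      ∫ x in {x : K | x ≠ 0 ∧ ord x = n₀}, Φ (u * x + v * x⁻¹) * f x * (‖x‖ : ℂ)⁻¹ ∂μ :=
  tsum_eq_single n₀ fun _ hn =>
    setIntegral_shell_eq_zero μ hq hord hΦadd hΦ1 hx₀q hx₀ hu hv huv (by omega) hf

lemma bessel_norm_cpow_mul (hq : 1 < q)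
    (hord : ∀ x : K, x ≠ 0 → ‖x‖ = (q : ℝ) ^ (-ord x))
    (hΦadd : ∀ x y, Φ (x + y) = Φ x * Φ y) (hΦ1 : ∀ x : K, ‖x‖ ≤ 1 → Φ x = 1)
    (hΦ2 : ∃ x : K, x ∈ pSet q (-1) ∧ Φ x ≠ 1) {χ : K → ℂ}
    (hχ : ∀ x t : K, x ≠ 0 → ‖t‖ < ‖x‖ → χ (x + t) = χ x) {u v : K} (hu : u ≠ 0) (hv : v ≠ 0)
    (huv : ord u + ord v ≤ -2) (n₀ : ℤ) (hn₀ : ord v - ord u = 2 * n₀) (α : ℂ) :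
    bessel μ Φ ord (fun x => (‖x‖ : ℂ) ^ α * χ x) u v =
      (((q : ℝ) ^ (-n₀) : ℝ) : ℂ) ^ α * bessel μ Φ ord χ u v := by
  obtain ⟨x₀, hx₀q, hx₀⟩ := hΦ2
  have hx₀q : ‖x₀‖ ≤ q := by simpa [pSet] using hx₀q
  have hχα : ∀ x t : K, x ≠ 0 → ‖t‖ < ‖x‖ →
      (‖x + t‖ : ℂ) ^ α * χ (x + t) = (‖x‖ : ℂ) ^ α * χ x := fun x t hx ht => by
    rw [norm_add_eq_left_of_norm_lt ht, hχ x t hx ht]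
  rw [bessel_eq_setIntegral_shell μ hq hord hΦadd hΦ1 hx₀q hx₀ hu hv huv hn₀ hχα,
    bessel_eq_setIntegral_shell μ hq hord hΦadd hΦ1 hx₀q hx₀ hu hv huv hn₀ hχ,
    ← integral_const_mul, shell_eq_sphere hq hord]
  refine setIntegral_congr_fun isClosed_sphere.measurableSet fun x hx => ?_
  rw [mem_sphere_zero_iff_norm.mp hx]
  ring

end Bessel

theorem bessel_twist_general
    [NontriviallyNormedField K] [IsUltrametricDist K]
    [LocallyCompactSpace K] [MeasurableSpace K] [BorelSpace K]
    (q : ℕ) (hq_one : 1 < q)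
    (ord : K → ℤ) (hord : ∀ x : K, x ≠ 0 → ‖x‖ = (q : ℝ) ^ (-ord x))
    (μ : Measure K) [μ.IsAddHaarMeasure]
    (Φ : K → ℂ) (hΦadd : ∀ x y : K, Φ (x + y) = Φ x * Φ y)
    (hΦ1 : ∀ x : K, ‖x‖ ≤ 1 → Φ x = 1)
    (hΦ2 : ∃ x : K, x ∈ pSet q (-1) ∧ Φ x ≠ 1)
    (χ : K → ℂ) (hχmul : ∀ x y : K, x ≠ 0 → y ≠ 0 → χ (x * y) = χ x * χ y)
    (hχtriv : ∀ x : K, ‖x - 1‖ < 1 → χ x = 1)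
    (u v : K) (hu : u ≠ 0) (hv : v ≠ 0)
    (m : ℤ) (hm : m = -ord (u * v)) (hm2 : 2 ≤ m) :
    (ord u = ord v → ∀ α : ℂ,
        bessel μ Φ ord (fun x => (‖x‖ : ℂ) ^ α * χ x) u v = bessel μ Φ ord χ u v) ∧
    (ord u = ord v + 2 → ∀ α : ℂ,
        bessel μ Φ ord (fun x => (‖x‖ : ℂ) ^ α * χ x) u v =
          (q : ℂ) ^ α * bessel μ Φ ord χ u v) := by
  have : ProperSpace K := .of_nontriviallyNormedField_of_weaklyLocallyCompactSpace K
  have huv : ord u + ord v ≤ -2 := by rw [ord_mul hq_one hord hu hv] at hm; omega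
  have twist := bessel_norm_cpow_mul μ hq_one hord hΦadd hΦ1 hΦ2
    (fun x t hx ht => map_add_eq_of_norm_lt hχmul hχtriv hx ht) hu hv huv
  refine ⟨fun h α => ?_, fun h α => ?_⟩
  · simpa using twist 0 (by omega) α
  · simpa using twist (-1) (by omega) α

/-- unramified twists of mildly ramified Bessel functions. -/
theorem bessel_twist
    [NontriviallyNormedField K] [IsUltrametricDist K]
    [CompleteSpace K] [LocallyCompactSpace K] [MeasurableSpace K] [BorelSpace K]
    (q : ℕ) (hq_odd : Odd q) (hq_one : 1 < q)
    (hfin : ∃ R : Finset K, IsResidueSystem R ∧ R.card = q)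
    (ord : K → ℤ) (hord : ∀ x : K, x ≠ 0 → ‖x‖ = (q : ℝ) ^ (-ord x))
    (ϖ : K) (hϖ0 : ϖ ≠ 0) (hϖ1 : ord ϖ = 1)
    (μ : Measure K) [μ.IsAddHaarMeasure] (hμO : μ {x : K | ‖x‖ ≤ 1} = 1)
    (Φ : K → ℂ) (hΦadd : ∀ x y : K, Φ (x + y) = Φ x * Φ y)
    (hΦ1 : ∀ x : K, ‖x‖ ≤ 1 → Φ x = 1)
    (hΦ2 : ∃ x : K, x ∈ pSet q (-1) ∧ Φ x ≠ 1)
    (χ : K → ℂ) (hχmul : ∀ x y : K, x ≠ 0 → y ≠ 0 → χ (x * y) = χ x * χ y)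
    (hχ0 : ∀ x : K, x ≠ 0 → χ x ≠ 0)
    (hχtriv : ∀ x : K, ‖x - 1‖ < 1 → χ x = 1)
    (hχnt : ∃ x : K, x ≠ 0 ∧ χ x ≠ 1)
    (u v : K) (hu : u ≠ 0) (hv : v ≠ 0)
    (m : ℤ) (hm : m = -ord (u * v)) (hm2 : 2 ≤ m) :
    (ord u = ord v → ∀ α : ℂ,
        bessel μ Φ ord (fun x => (‖x‖ : ℂ) ^ α * χ x) u v = bessel μ Φ ord χ u v) ∧
    (ord u = ord v + 2 → ∀ α : ℂ,
        bessel μ Φ ord (fun x => (‖x‖ : ℂ) ^ α * χ x) u v =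
          (q : ℂ) ^ α * bessel μ Φ ord χ u v) :=
  bessel_twist_general q hq_one ord hord μ Φ hΦadd hΦ1 hΦ2 χ hχmul hχtriv u v hu hv m hm hm2
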